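/- Let (Y_n)_{n≥1} be an exchangeable sequence of random variables taking values in a finite set Ω, and let F ⊂ ℕ be a finite set with 1 ∉ F. Suppose the full joint distribution of (Y_n) is invariant under all finite permutations of ℕ fixing 1. Then Y_1 and (Y_j)_{j∈F} are conditionally independent given (Y_j)_{j ∉ F∪{1}}. -/

import Mathlib

/-!
Let `f = φ (Y 1)` with `φ` bounded, `G = σ(Y_j : j ∉ F ∪ {1})` and `H = σ(Y_j : j ≠ 1) ⊇ G`.
Since `(Y_j)_{j ∈ F}` is `H`-measurable, conditional independence follows once
`E[f | H] = E[f | G]`, and for `G ≤ H` this is equivalent to `E[f E[f | H]] = E[f E[f | G]]`,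
because `‖E[f | H] - E[f | G]‖₂² = E[f E[f | H]] - E[f E[f | G]]`. Invariance under the finite
permutations fixing `1` shows that `E[f E[f | σ(Y_j : j ∈ S)]]` depends only on `#S` for finite
`S ∌ 1`. Both `G` and `H` are increasing limits of such σ-algebras, along sequences of index
sets with matching sizes, so Lévy's upward theorem gives the equality.
-/

open MeasureTheory Filter Topology

/-- The σ-algebra generated by the variables `(Y_j)` for `j ∉ F ∪ {1}`. -/
def tailSigma {α Ω : Type*} [MeasurableSpace Ω] (Y : ℕ → α → Ω) (F : Finset ℕ) :
    MeasurableSpace α :=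
  MeasurableSpace.comap
    (fun x => fun j : {j : ℕ // j ∉ F ∧ j ≠ 1} => Y (j : ℕ) x) MeasurableSpace.pi

theorem Finset.exists_perm_image_eq {α : Type*} [DecidableEq α] {s t : Finset α}
    (h : s.card = t.card) :
    ∃ π : Equiv.Perm α, (∀ x ∉ s ∪ t, π x = x) ∧ s.image π = t := by
  let e : {x : ↥(s ∪ t) // ↑x ∈ s} ≃ {x : ↥(s ∪ t) // ↑x ∈ t} :=
    (Equiv.subtypeSubtypeEquivSubtype fun hx => mem_union_left t hx).trans <|
      (s.equivOfCardEq h).trans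
        (Equiv.subtypeSubtypeEquivSubtype fun hx => mem_union_right s hx).symm
  let π := Equiv.Perm.ofSubtype e.extendSubtype
  have hmaps : ∀ x ∈ s, π x ∈ t := fun x hx => by
    rw [Equiv.Perm.ofSubtype_apply_of_mem _ (mem_union_left t hx)]
    exact e.extendSubtype_mem _ hx
  refine ⟨π, fun x hx => Equiv.Perm.ofSubtype_apply_of_not_mem _ hx, ?_⟩
  refine eq_of_subset_of_card_le (image_subset_iff.mpr hmaps) ?_
  rw [card_image_of_injective _ π.injective, h]

section GeneratedBy

variable {ι α Ω : Type*} [mΩ : MeasurableSpace Ω]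

def generatedBy (Y : ι → α → Ω) (S : Set ι) : MeasurableSpace α :=
  ⨆ j ∈ S, mΩ.comap (Y j)

variable (Y : ι → α → Ω)

theorem comap_pi_eq_iSup_comap {κ : Type*} (g : κ → α → Ω) :
    MeasurableSpace.comap (fun x k => g k x) MeasurableSpace.pi = ⨆ k, mΩ.comap (g k) := by
  simp_rw [MeasurableSpace.pi, MeasurableSpace.comap_iSup, MeasurableSpace.comap_comp]
  rfl

theorem comap_pi_eq_generatedBy (S : Set ι) :
    MeasurableSpace.comap (fun x (j : S) => Y j x) MeasurableSpace.pi = generatedBy Y S := by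
  rw [comap_pi_eq_iSup_comap, generatedBy, iSup_subtype']

theorem comap_le_generatedBy {S : Set ι} {j : ι} (hj : j ∈ S) :
    mΩ.comap (Y j) ≤ generatedBy Y S :=
  le_iSup₂_of_le j hj le_rfl

theorem generatedBy_mono {S T : Set ι} (h : S ⊆ T) : generatedBy Y S ≤ generatedBy Y T :=
  biSup_mono h

theorem generatedBy_le [MeasurableSpace α] (hY : ∀ j, Measurable (Y j)) (S : Set ι) :
    generatedBy Y S ≤ ‹MeasurableSpace α› :=
  iSup₂_le fun j _ => (hY j).comap_le

theorem generatedBy_iUnion {κ : Type*} (S : κ → Set ι) :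
    generatedBy Y (⋃ k, S k) = ⨆ k, generatedBy Y (S k) :=
  iSup_iUnion S _

theorem generatedBy_comp (π : ι → ι) (S : Set ι) :
    generatedBy (fun j => Y (π j)) S = generatedBy Y (π '' S) :=
  (iSup_image (f := π) (g := fun j => mΩ.comap (Y j))).symm

end GeneratedBy

section CondExp

variable {α : Type*} {mα : MeasurableSpace α} {μ : Measure α} [IsFiniteMeasure μ]

theorem integral_mul_condExp_of_stronglyMeasurable {m : MeasurableSpace α} (hm : m ≤ mα)
    {f g : α → ℝ} (hf : Integrable f μ) (hg : StronglyMeasurable[m] g) {C : ℝ}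
    (hgC : ∀ᵐ x ∂μ, ‖g x‖ ≤ C) :
    ∫ x, g x * μ[f|m] x ∂μ = ∫ x, g x * f x ∂μ :=
  calc ∫ x, g x * μ[f|m] x ∂μ = ∫ x, μ[g * f|m] x ∂μ :=
        integral_congr_ae (condExp_stronglyMeasurable_mul_of_bound hm hg hf C hgC).symm
    _ = ∫ x, g x * f x ∂μ := integral_condExp hm

theorem condExp_ae_eq_of_integral_mul_condExp_eq {G H : MeasurableSpace α} (hGH : G ≤ H)
    (hH : H ≤ mα) {f : α → ℝ} (hf : Integrable f μ) {R : ℝ} (hfR : ∀ᵐ x ∂μ, |f x| ≤ R)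
    (heq : ∫ x, f x * μ[f|H] x ∂μ = ∫ x, f x * μ[f|G] x ∂μ) :
    μ[f|H] =ᵐ[μ] μ[f|G] := by
  set U := μ[f|G]
  set V := μ[f|H]
  have hU : StronglyMeasurable[H] U := stronglyMeasurable_condExp.mono hGH
  have hV : StronglyMeasurable[H] V := stronglyMeasurable_condExp
  have hUR : ∀ᵐ x ∂μ, ‖U x‖ ≤ R := ae_bdd_abs_condExp_of_ae_bdd_abs hfR
  have hVR : ∀ᵐ x ∂μ, ‖V x‖ ≤ R := ae_bdd_abs_condExp_of_ae_bdd_abs hfR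
  have hUi : Integrable U μ := integrable_condExp
  have hVi : Integrable V μ := integrable_condExp
  -- `∫ U V = ∫ U f = ∫ U²` and `∫ V² = ∫ f V`, so `∫ (V - U)² = ∫ f V - ∫ f U = 0`
  have hUV : ∫ x, U x * V x ∂μ = ∫ x, U x * U x ∂μ := by
    rw [integral_mul_condExp_of_stronglyMeasurable hH hf hU hUR,
      integral_mul_condExp_of_stronglyMeasurable (hGH.trans hH) hf stronglyMeasurable_condExp hUR]
  have hfV : ∫ x, f x * V x ∂μ = ∫ x, V x * V x ∂μ := by
    simp_rw [mul_comm (f _)]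
    exact (integral_mul_condExp_of_stronglyMeasurable hH hf hV hVR).symm
  have hfU : ∫ x, f x * U x ∂μ = ∫ x, U x * U x ∂μ := by
    simp_rw [mul_comm (f _)]
    exact (integral_mul_condExp_of_stronglyMeasurable (hGH.trans hH) hf
      stronglyMeasurable_condExp hUR).symm
  have iVV : Integrable (fun x => V x * V x) μ := hVi.bdd_mul (hV.mono hH).aestronglyMeasurable hVR
  have iUV : Integrable (fun x => U x * V x) μ := hVi.bdd_mul (hU.mono hH).aestronglyMeasurable hUR
  have iUU : Integrable (fun x => U x * U x) μ := hUi.bdd_mul (hU.mono hH).aestronglyMeasurable hUR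
  have hexpand : (fun x => (V x - U x) * (V x - U x))
      = fun x => (V x * V x - U x * V x) - (U x * V x - U x * U x) := by
    ext x; ring
  have iVV_UV : Integrable (fun x => V x * V x - U x * V x) μ := iVV.sub iUV
  have iUV_UU : Integrable (fun x => U x * V x - U x * U x) μ := iUV.sub iUU
  have hsq : ∫ x, (V x - U x) * (V x - U x) ∂μ = 0 := by
    rw [hexpand, integral_sub iVV_UV iUV_UU, integral_sub iVV iUV,
      integral_sub iUV iUU, hUV, ← hfV, heq, hfU, sub_self]
  have hsq_int : Integrable (fun x => (V x - U x) * (V x - U x)) μ := by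
    rw [hexpand]; exact iVV_UV.sub iUV_UU
  filter_upwards [(integral_eq_zero_iff_of_nonneg (fun x => mul_self_nonneg _) hsq_int).1 hsq]
    with x hx
  exact sub_eq_zero.1 (mul_self_eq_zero.1 hx)

theorem tendsto_integral_mul_condExp (ℱ : Filtration ℕ mα) {f : α → ℝ}
    (hf : AEStronglyMeasurable f μ) {R : ℝ} (hfR : ∀ᵐ x ∂μ, |f x| ≤ R) :
    Tendsto (fun n => ∫ x, f x * μ[f|ℱ n] x ∂μ) atTop
      (𝓝 (∫ x, f x * μ[f|⨆ n, ℱ n] x ∂μ)) := by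
  refine tendsto_integral_of_dominated_convergence (fun _ => R * R)
    (fun n => hf.mul (stronglyMeasurable_condExp.mono (ℱ.le n)).aestronglyMeasurable)
    (integrable_const _) (fun n => ?_) ?_
  · filter_upwards [hfR, ae_bdd_abs_condExp_of_ae_bdd_abs (m := ℱ n) hfR] with x hfx hcx
    rw [norm_mul, Real.norm_eq_abs, Real.norm_eq_abs]
    exact mul_le_mul hfx hcx (abs_nonneg _) ((abs_nonneg _).trans hfx)
  · filter_upwards [tendsto_ae_condExp (μ := μ) (ℱ := ℱ) f] with x hx
    exact hx.const_mul (f x)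

theorem condExp_mul_ae_eq_of_condExp_ae_eq {G H : MeasurableSpace α} (hGH : G ≤ H)
    (hH : H ≤ mα) {f b : α → ℝ} (hf : Integrable f μ) (hb : StronglyMeasurable[H] b) {C : ℝ}
    (hbC : ∀ᵐ x ∂μ, ‖b x‖ ≤ C) (hfHG : μ[f|H] =ᵐ[μ] μ[f|G]) :
    μ[f * b|G] =ᵐ[μ] μ[f|G] * μ[b|G] := by
  have hbi : Integrable b μ := (integrable_const C).mono' (hb.mono hH).aestronglyMeasurable hbC
  calc μ[f * b|G] =ᵐ[μ] μ[μ[b * f|H]|G] := by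
        rw [mul_comm f b]; exact (condExp_condExp_of_le hGH hH).symm
    _ =ᵐ[μ] μ[b * μ[f|G]|G] := by
        refine condExp_congr_ae ?_
        filter_upwards [condExp_stronglyMeasurable_mul_of_bound hH hb hf C hbC, hfHG]
          with x hx hfx
        rw [hx, Pi.mul_apply, Pi.mul_apply, hfx]
    _ =ᵐ[μ] μ[f|G] * μ[b|G] := by
        rw [mul_comm b]
        exact condExp_mul_of_stronglyMeasurable_left stronglyMeasurable_condExp
          (integrable_condExp.mul_bdd (hb.mono hH).aestronglyMeasurable hbC) hbi

end CondExp

section Transfer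

variable {α β γ : Type*} {mα : MeasurableSpace α} [MeasurableSpace β] [mγ : MeasurableSpace γ]
  {μ : Measure α} {X : α → β} {Z Z' : α → γ}

theorem setIntegral_preimage_eq_of_map_prodMk_eq (hX : Measurable X) (hZ : Measurable Z)
    (hZ' : Measurable Z')
    (hlaw : μ.map (fun x => (X x, Z x)) = μ.map (fun x => (X x, Z' x)))
    {h : β × γ → ℝ} (hh : Measurable h) {D : Set γ} (hD : MeasurableSet D) :
    ∫ x in Z ⁻¹' D, h (X x, Z x) ∂μ = ∫ x in Z' ⁻¹' D, h (X x, Z' x) ∂μ := by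
  have key : ∀ W : α → γ, Measurable W → ∫ x in W ⁻¹' D, h (X x, W x) ∂μ
      = ∫ p in Set.univ ×ˢ D, h p ∂(μ.map (fun x => (X x, W x))) := fun W hW => by
    rw [setIntegral_map (MeasurableSet.univ.prod hD) hh.aestronglyMeasurable
      (hX.prodMk hW).aemeasurable, Set.mk_preimage_prod, Set.preimage_univ, Set.univ_inter]
  rw [key Z hZ, key Z' hZ', hlaw]

theorem condExp_comap_ae_eq_comp_of_map_prodMk_eq (hX : Measurable X) (hZ : Measurable Z)
    (hZ' : Measurable Z')
    (hlaw : μ.map (fun x => (X x, Z x)) = μ.map (fun x => (X x, Z' x)))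
    {φ : β → ℝ} (hφ : Measurable φ) (hφX : Integrable (φ ∘ X) μ) [IsFiniteMeasure μ]
    {g : γ → ℝ} (hg : StronglyMeasurable g) (hgZ : μ[φ ∘ X|mγ.comap Z] = g ∘ Z) :
    μ[φ ∘ X|mγ.comap Z'] =ᵐ[μ] g ∘ Z' := by
  have hmapZ : μ.map Z = μ.map Z' := by
    have h := congrArg (Measure.map Prod.snd) hlaw
    rwa [Measure.map_map measurable_snd (hX.prodMk hZ),
      Measure.map_map measurable_snd (hX.prodMk hZ')] at h
  have hgZ'_int : Integrable (g ∘ Z') μ := by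
    have : Integrable g (μ.map Z) :=
      (integrable_map_measure hg.aestronglyMeasurable hZ.aemeasurable).2
        (hgZ ▸ integrable_condExp)
    rw [hmapZ] at this
    exact (integrable_map_measure hg.aestronglyMeasurable hZ'.aemeasurable).1 this
  refine (ae_eq_condExp_of_forall_setIntegral_eq hZ'.comap_le hφX
    (fun _ _ _ => hgZ'_int.integrableOn) ?_
    (hg.comp_measurable (comap_measurable Z')).aestronglyMeasurable).symm
  rintro _ ⟨D, hD, rfl⟩ -
  calc ∫ x in Z' ⁻¹' D, g (Z' x) ∂μ = ∫ x in Z ⁻¹' D, g (Z x) ∂μ :=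
        (setIntegral_preimage_eq_of_map_prodMk_eq hX hZ hZ' hlaw
          (hg.measurable.comp measurable_snd) hD).symm
    _ = ∫ x in Z ⁻¹' D, μ[φ ∘ X|mγ.comap Z] x ∂μ := by rw [hgZ]; rfl
    _ = ∫ x in Z ⁻¹' D, φ (X x) ∂μ := setIntegral_condExp hZ.comap_le hφX ⟨D, hD, rfl⟩
    _ = ∫ x in Z' ⁻¹' D, φ (X x) ∂μ :=
        setIntegral_preimage_eq_of_map_prodMk_eq hX hZ hZ' hlaw
          (hφ.comp measurable_fst) hD

theorem integral_mul_condExp_comap_eq_of_map_prodMk_eq (hX : Measurable X) (hZ : Measurable Z)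
    (hZ' : Measurable Z')
    (hlaw : μ.map (fun x => (X x, Z x)) = μ.map (fun x => (X x, Z' x)))
    {φ : β → ℝ} (hφ : Measurable φ) (hφX : Integrable (φ ∘ X) μ) [IsFiniteMeasure μ] :
    ∫ x, φ (X x) * μ[φ ∘ X|mγ.comap Z] x ∂μ = ∫ x, φ (X x) * μ[φ ∘ X|mγ.comap Z'] x ∂μ := by
  obtain ⟨g, hg, hgZ⟩ := (stronglyMeasurable_condExp (m := mγ.comap Z) (f := φ ∘ X)
    (μ := μ)).exists_eq_measurable_comp
  have hψ : Measurable fun p : β × γ => φ p.1 * g p.2 :=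
    (hφ.comp measurable_fst).mul (hg.measurable.comp measurable_snd)
  have key : ∀ W : α → γ, Measurable W → ∫ x, φ (X x) * g (W x) ∂μ
      = ∫ p, φ p.1 * g p.2 ∂(μ.map (fun x => (X x, W x))) := fun W hW =>
    (integral_map (hX.prodMk hW).aemeasurable hψ.aestronglyMeasurable).symm
  calc ∫ x, φ (X x) * μ[φ ∘ X|mγ.comap Z] x ∂μ = ∫ x, φ (X x) * g (Z x) ∂μ := by
        rw [hgZ]; rfl
    _ = ∫ x, φ (X x) * g (Z' x) ∂μ := by rw [key Z hZ, key Z' hZ', hlaw]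
    _ = ∫ x, φ (X x) * μ[φ ∘ X|mγ.comap Z'] x ∂μ := by
        refine integral_congr_ae ?_
        filter_upwards [condExp_comap_ae_eq_comp_of_map_prodMk_eq hX hZ hZ' hlaw hφ hφX hg hgZ]
          with x hx
        rw [hx]; rfl

end Transfer

section Exchangeable

variable {α Ω : Type*} {mα : MeasurableSpace α} {μ : Measure α} [IsFiniteMeasure μ]
  [MeasurableSpace Ω] {Y : ℕ → α → Ω}

theorem tailSigma_eq_generatedBy (F : Finset ℕ) :
    tailSigma Y F = generatedBy Y {j | j ∉ F ∧ j ≠ 1} :=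
  comap_pi_eq_generatedBy Y {j | j ∉ F ∧ j ≠ 1}

theorem tendsto_integral_mul_condExp_generatedBy_range_sdiff (hY : ∀ n, Measurable (Y n))
    (s : Finset ℕ) {f : α → ℝ} (hf : AEStronglyMeasurable f μ) {R : ℝ}
    (hfR : ∀ᵐ x ∂μ, |f x| ≤ R) :
    Tendsto (fun n => ∫ x, f x * μ[f|generatedBy Y ↑(Finset.range n \ s)] x ∂μ) atTop
      (𝓝 (∫ x, f x * μ[f|generatedBy Y (↑s)ᶜ] x ∂μ)) := by
  have hmono : Monotone fun n => (↑(Finset.range n \ s) : Set ℕ) := fun m n hmn =>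
    Finset.coe_subset.2 (Finset.sdiff_subset_sdiff (Finset.range_subset_range.2 hmn) le_rfl)
  have hunion : ⋃ n, (↑(Finset.range n \ s) : Set ℕ) = (↑s)ᶜ := by
    ext j; simpa using fun _ => ⟨j + 1, j.lt_succ_self⟩
  let ℱ : Filtration ℕ mα :=
    ⟨fun n => generatedBy Y ↑(Finset.range n \ s), fun _ _ h => generatedBy_mono Y (hmono h),
      fun n => generatedBy_le Y hY _⟩
  rw [← hunion, generatedBy_iUnion]
  exact tendsto_integral_mul_condExp ℱ hf hfR

theorem integral_mul_condExp_generatedBy_eq_of_card_eq (hY : ∀ n, Measurable (Y n))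
    (hfix : ∀ π : Equiv.Perm ℕ, {n : ℕ | π n ≠ n}.Finite → π 1 = 1 →
      Measure.map (fun x => fun n => Y (π n) x) μ = Measure.map (fun x => fun n => Y n x) μ)
    {φ : Ω → ℝ} (hφ : Measurable φ) (hφi : Integrable (φ ∘ Y 1) μ) {S T : Finset ℕ}
    (hS : 1 ∉ S) (hT : 1 ∉ T) (hST : S.card = T.card) :
    ∫ x, φ (Y 1 x) * μ[φ ∘ Y 1|generatedBy Y S] x ∂μ
      = ∫ x, φ (Y 1 x) * μ[φ ∘ Y 1|generatedBy Y T] x ∂μ := by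
  obtain ⟨π, hπ, hπST⟩ := Finset.exists_perm_image_eq hST
  have hπ_fin : {n : ℕ | π n ≠ n}.Finite :=
    (S ∪ T).finite_toSet.subset fun n hn => by_contra fun h => hn (hπ n h)
  have hπ1 : π 1 = 1 := hπ 1 (by simp [hS, hT])
  let Z : α → (S → Ω) := fun x j => Y j x
  let Z' : α → (S → Ω) := fun x j => Y (π j) x
  have hlaw : μ.map (fun x => (Y 1 x, Z x)) = μ.map (fun x => (Y 1 x, Z' x)) := by
    let P : (ℕ → Ω) → Ω × (S → Ω) := fun y => (y 1, fun j => y j)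
    have hP : Measurable P :=
      (measurable_pi_apply 1).prodMk (measurable_pi_lambda _ fun j => measurable_pi_apply _)
    have h := congrArg (Measure.map P) (hfix π hπ_fin hπ1)
    rw [Measure.map_map hP (measurable_pi_lambda _ fun n => hY _),
      Measure.map_map hP (measurable_pi_lambda _ fun n => hY _)] at h
    simp only [Function.comp_def, P, hπ1] at h
    exact h.symm
  have hZ : MeasurableSpace.comap Z MeasurableSpace.pi = generatedBy Y S :=
    comap_pi_eq_generatedBy Y S
  have hZ' : MeasurableSpace.comap Z' MeasurableSpace.pi = generatedBy Y T := by
    refine (comap_pi_eq_generatedBy (fun j => Y (π j)) S).trans ?_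
    rw [generatedBy_comp, ← Finset.coe_image, hπST]
  rw [← hZ, ← hZ']
  exact integral_mul_condExp_comap_eq_of_map_prodMk_eq (hY 1)
    (measurable_pi_lambda _ fun j => hY _) (measurable_pi_lambda _ fun j => hY _) hlaw hφ hφi

theorem condExp_generatedBy_compl_ae_eq (hY : ∀ n, Measurable (Y n))
    (hfix : ∀ π : Equiv.Perm ℕ, {n : ℕ | π n ≠ n}.Finite → π 1 = 1 →
      Measure.map (fun x => fun n => Y (π n) x) μ = Measure.map (fun x => fun n => Y n x) μ)
    {φ : Ω → ℝ} (hφ : Measurable φ) {R : ℝ} (hφR : ∀ y, |φ y| ≤ R) {E : Finset ℕ}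
    (hE : 1 ∈ E) :
    μ[φ ∘ Y 1|generatedBy Y {1}ᶜ] =ᵐ[μ] μ[φ ∘ Y 1|generatedBy Y (↑E)ᶜ] := by
  set f := φ ∘ Y 1
  have hf : Measurable f := hφ.comp (hY 1)
  have hfR : ∀ᵐ x ∂μ, |f x| ≤ R := ae_of_all _ fun x => hφR _
  have hfi : Integrable f μ :=
    (integrable_const R).mono' hf.aestronglyMeasurable (by simpa only [Real.norm_eq_abs])
  have hlim (s : Finset ℕ) :=
    tendsto_integral_mul_condExp_generatedBy_range_sdiff hY s hf.aestronglyMeasurable hfR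
  -- once `E ⊆ range n`, both `range n \ {1}` and `range (n + k) \ E` have `n - 1` elements
  obtain ⟨N, hN⟩ := E.exists_nat_subset_range
  set k := E.card - 1
  have hcard : ∀ n ≥ N, (Finset.range n \ {1}).card = (Finset.range (n + k) \ E).card := by
    intro n hn
    have hEn : E ⊆ Finset.range n := hN.trans (Finset.range_subset_range.2 hn)
    have hEk : E ⊆ Finset.range (n + k) := hEn.trans (Finset.range_subset_range.2 (by omega))
    have hE1 : 0 < E.card := Finset.card_pos.2 ⟨1, hE⟩
    rw [Finset.card_sdiff_of_subset (Finset.singleton_subset_iff.2 (hEn hE)),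
      Finset.card_sdiff_of_subset hEk, Finset.card_range, Finset.card_range,
      Finset.card_singleton]
    omega
  have hlim' : Tendsto (fun n => ∫ x, f x * μ[f|generatedBy Y ↑(Finset.range n \ {1})] x ∂μ)
      atTop (𝓝 (∫ x, f x * μ[f|generatedBy Y (↑E)ᶜ] x ∂μ)) := by
    refine ((hlim E).comp (tendsto_add_atTop_nat k)).congr' ?_
    filter_upwards [eventually_ge_atTop N] with n hn
    exact (integral_mul_condExp_generatedBy_eq_of_card_eq hY hfix hφ hfi (by simp)
      (by simp [hE]) (hcard n hn)).symm
  refine condExp_ae_eq_of_integral_mul_condExp_eq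
    (generatedBy_mono Y (Set.compl_subset_compl.2 (by simpa using hE))) (generatedBy_le Y hY _)
    hfi hfR (tendsto_nhds_unique ?_ hlim')
  simpa only [Finset.coe_singleton] using hlim {1}

end Exchangeable

theorem stmt16_general {α : Type*} [MeasurableSpace α] (μ : Measure α) [IsProbabilityMeasure μ]
    {Ω : Type*} [MeasurableSpace Ω] [MeasurableSingletonClass Ω]
    (Y : ℕ → α → Ω) (hY : ∀ n, Measurable (Y n))
    -- invariance under all finite permutations fixing `1`
    (hfix : ∀ π : Equiv.Perm ℕ, {n : ℕ | π n ≠ n}.Finite → π 1 = 1 →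
      Measure.map (fun x => fun n => Y (π n) x) μ =
        Measure.map (fun x => fun n => Y n x) μ)
    (F : Finset ℕ) (hF : 1 ∉ F) :
    ∀ (a : Ω) (w : F → Ω),
      MeasureTheory.condExp (tailSigma Y F) μ
        (Set.indicator {x | Y 1 x = a ∧ ∀ j : F, Y (j : ℕ) x = w j} (fun _ => (1 : ℝ)))
        =ᵐ[μ]
      (fun x =>
        (MeasureTheory.condExp (tailSigma Y F) μ
          (Set.indicator {x | Y 1 x = a} (fun _ => (1 : ℝ))) x) *
        (MeasureTheory.condExp (tailSigma Y F) μ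
          (Set.indicator {x | ∀ j : F, Y (j : ℕ) x = w j} (fun _ => (1 : ℝ))) x)) := by
  intro a w
  set φ : Ω → ℝ := Set.indicator {a} 1
  set b : α → ℝ := Set.indicator {x | ∀ j : F, Y (j : ℕ) x = w j} 1
  have hφ : Measurable φ := measurable_const.indicator (measurableSet_singleton a)
  have hf : Set.indicator {x | Y 1 x = a} 1 = φ ∘ Y 1 := rfl
  have hfi : Integrable (φ ∘ Y 1) μ :=
    (integrable_const 1).indicator (hY 1 (measurableSet_singleton a))
  have hφR : ∀ y, |φ y| ≤ 1 := fun y => by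
    by_cases h : y = a <;> simp [φ, h]
  have hb : StronglyMeasurable[generatedBy Y {1}ᶜ] b := by
    refine stronglyMeasurable_const.indicator ?_
    simp only [Set.ofPred_forall]
    exact MeasurableSet.iInter fun j =>
      comap_le_generatedBy Y (Set.mem_compl_singleton_iff.2 fun h => hF (by simpa [h] using j.2))
      _ ⟨{w j}, measurableSet_singleton _, rfl⟩
  have hbR : ∀ x, ‖b x‖ ≤ 1 := fun x => (norm_indicator_le_norm_self _ x).trans (by simp)
  have hG : tailSigma Y F = generatedBy Y (↑(insert 1 F))ᶜ := by
    rw [tailSigma_eq_generatedBy]; congr 1; ext j; simp [and_comm]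
  rw [Set.ofPred_and, ← Pi.one_def, Set.inter_indicator_one, hf, hG]
  exact condExp_mul_ae_eq_of_condExp_ae_eq
    (generatedBy_mono Y (Set.compl_subset_compl.2 (by simp))) (generatedBy_le Y hY _)
    hfi hb (ae_of_all _ hbR)
    (condExp_generatedBy_compl_ae_eq hY hfix hφ hφR (Finset.mem_insert_self 1 F))

/-- de Finetti-type conditional independence: if `(Y_n)_{n≥1}` is an exchangeable
sequence of random variables with values in a finite set `Ω`, whose joint law is
invariant under all finite permutations of `ℕ` (in particular those fixing `1`), and
`F` is a finite set of indices with `1 ∉ F`, then `Y_1` and `(Y_j)_{j∈F}` are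
conditionally independent given `(Y_j)_{j∉F∪{1}}`. -/
theorem stmt16 {α : Type*} [MeasurableSpace α] (μ : Measure α) [IsProbabilityMeasure μ]
    {Ω : Type*} [Fintype Ω] [MeasurableSpace Ω] [MeasurableSingletonClass Ω]
    (Y : ℕ → α → Ω) (hY : ∀ n, Measurable (Y n))
    -- exchangeability: invariance of the joint law under all finite permutations
    (hexch : ∀ π : Equiv.Perm ℕ, {n : ℕ | π n ≠ n}.Finite →
      Measure.map (fun x => fun n => Y (π n) x) μ =
        Measure.map (fun x => fun n => Y n x) μ)
    -- invariance under all finite permutations fixing `1`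
    (hfix : ∀ π : Equiv.Perm ℕ, {n : ℕ | π n ≠ n}.Finite → π 1 = 1 →
      Measure.map (fun x => fun n => Y (π n) x) μ =
        Measure.map (fun x => fun n => Y n x) μ)
    (F : Finset ℕ) (hF : 1 ∉ F) :
    ∀ (a : Ω) (w : F → Ω),
      MeasureTheory.condExp (tailSigma Y F) μ
        (Set.indicator {x | Y 1 x = a ∧ ∀ j : F, Y (j : ℕ) x = w j} (fun _ => (1 : ℝ)))
        =ᵐ[μ]
      (fun x =>
        (MeasureTheory.condExp (tailSigma Y F) μ
          (Set.indicator {x | Y 1 x = a} (fun _ => (1 : ℝ))) x) *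
        (MeasureTheory.condExp (tailSigma Y F) μ
          (Set.indicator {x | ∀ j : F, Y (j : ℕ) x = w j} (fun _ => (1 : ℝ))) x)) :=
  stmt16_general μ Y hY hfix F hF
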